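/- arXiv:2404.19594 — 3 statements merged into one kernel-verified Lean document; each statement's English description precedes it below -/
import Mathlib

section
/- Let γ : ℝ → ℝ be a continuous function satisfying γ(s) < 0 for every s < 0 (as holds for any extended class K∞ function). Let b : [0,∞) → ℝ be differentiable with b(0) ≥ 0 and b'(t) ≥ -γ(b(t)) for all t ≥ 0. Then b(t) ≥ 0 for all t ≥ 0. -/
/-- Scalar comparison lemma underlying forward invariance of time-varying CBFs:
if `γ` is continuous with `γ s < 0` for `s < 0`, and `b` is differentiable on `[0,∞)`
with `b 0 ≥ 0` and `b' t ≥ -γ (b t)` for all `t ≥ 0`, then `b t ≥ 0` for all `t ≥ 0`. -/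
theorem cbf_scalar_comparison
    (γ : ℝ → ℝ) (hγ_cont : Continuous γ) (hγ_neg : ∀ s < (0 : ℝ), γ s < 0)
    (b b' : ℝ → ℝ)
    (hb_deriv : ∀ t ≥ (0 : ℝ), HasDerivAt b (b' t) t)
    (hb0 : 0 ≤ b 0)
    (hineq : ∀ t ≥ (0 : ℝ), b' t ≥ -γ (b t)) :
    ∀ t ≥ (0 : ℝ), 0 ≤ b t := by
  intro t ht
  by_contra h
  push_neg at h
  set S := Set.Icc (0:ℝ) t ∩ b ⁻¹' Set.Ici 0 with hS
  have hScl : IsClosed S := by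
    apply ContinuousOn.preimage_isClosed_of_isClosed ?_ isClosed_Icc isClosed_Ici
    intro s hs
    exact ((hb_deriv s hs.1).continuousAt).continuousWithinAt
  have hSne : S.Nonempty := ⟨0, ⟨le_refl 0, ht⟩, hb0⟩
  have hSbdd : BddAbove S := ⟨t, fun s hs => hs.1.2⟩
  set t₀ := sSup S with ht₀def
  have ht₀S : t₀ ∈ S := hScl.csSup_mem hSne hSbdd
  have ht₀t : t₀ < t :=
    lt_of_le_of_ne ht₀S.1.2 fun he => not_le.2 h (he ▸ ht₀S.2)
  have hneg : ∀ s ∈ Set.Ioc t₀ t, b s < 0 := by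
    intro s hs
    by_contra hb
    push_neg at hb
    have hsS : s ∈ S := ⟨⟨le_trans ht₀S.1.1 hs.1.le, hs.2⟩, hb⟩
    exact absurd (le_csSup hSbdd hsS) (not_le.2 hs.1)
  have hmono : StrictMonoOn b (Set.Icc t₀ t) := by
    apply strictMonoOn_of_deriv_pos (convex_Icc _ _)
    · intro s hs
      exact ((hb_deriv s (le_trans ht₀S.1.1 hs.1)).continuousAt).continuousWithinAt
    · intro s hs
      rw [interior_Icc] at hs
      have hs0 : (0:ℝ) ≤ s := le_trans ht₀S.1.1 hs.1.le
      rw [(hb_deriv s hs0).deriv]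
      have hbs : b s < 0 := hneg s ⟨hs.1, hs.2.le⟩
      have h1 := hineq s hs0
      have h2 := hγ_neg (b s) hbs
      linarith
  have := hmono (Set.left_mem_Icc.2 ht₀t.le) (Set.right_mem_Icc.2 ht₀t.le) ht₀t
  have hb0' : (0:ℝ) ≤ b t₀ := ht₀S.2
  linarith
end

section
/- Let d ∈ ℕ, let B : ℝ^d × [0,∞) → ℝ be continuously differentiable, and let γ : ℝ → ℝ be an extended class K∞ function (continuous, strictly increasing, γ(0) = 0). Let x : [0,∞) → ℝ^d be a differentiable trajectory such that for every t ≥ 0 the time-varying control-barrier-function inequality holds along the trajectory: ⟨∇_y B(x(t),t), x'(t)⟩ + ∂B/∂t(x(t),t) ≥ -γ(B(x(t),t)). If x(0) lies in the initial safe set C(0) = {y ∈ ℝ^d : B(y,0) ≥ 0}, then x(t) lies in C(t) = {y ∈ ℝ^d : B(y,t) ≥ 0} for all t ≥ 0; that is, the time-varying safe set C(t) is forward invariant for the trajectory. -/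
/-- Theorem 1 of the paper along a closed-loop trajectory: if `B : ℝ^d × [0,∞) → ℝ` is
continuously differentiable, `γ` is an extended class K∞ function (continuous, strictly
increasing, `γ 0 = 0`), and the trajectory `x` satisfies the time-varying CBF inequality
`⟨∇_y B(x t, t), x' t⟩ + ∂B/∂t (x t, t) ≥ -γ (B (x t, t))` (i.e. the total derivative of
`B` along the trajectory direction `(x' t, 1)` is at least `-γ (B (x t, t))`) for all
`t ≥ 0`, then `x 0 ∈ C 0` implies `x t ∈ C t` for all `t ≥ 0`, where
`C t = {y | B (y, t) ≥ 0}` is the time-varying safe set. -/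
theorem timeVarying_CBF_forward_invariance
    (d : ℕ) (B : EuclideanSpace ℝ (Fin d) × ℝ → ℝ) (hB : ContDiff ℝ 1 B)
    (γ : ℝ → ℝ) (hγ_cont : Continuous γ) (hγ_mono : StrictMono γ) (hγ0 : γ 0 = 0)
    (x x' : ℝ → EuclideanSpace ℝ (Fin d))
    (hx : ∀ t ≥ (0 : ℝ), HasDerivAt x (x' t) t)
    (hineq : ∀ t ≥ (0 : ℝ), fderiv ℝ B (x t, t) (x' t, 1) ≥ -γ (B (x t, t)))
    (h0 : x 0 ∈ {y : EuclideanSpace ℝ (Fin d) | B (y, 0) ≥ 0}) :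
    ∀ t ≥ (0 : ℝ), x t ∈ {y : EuclideanSpace ℝ (Fin d) | B (y, t) ≥ 0} := by
  intro T hT
  by_contra hneg
  simp only [Set.mem_setOf_eq, ge_iff_le, not_le] at hneg
  set φ : ℝ → ℝ := fun t => B (x t, t) with hφdef
  have hderiv : ∀ t ≥ (0 : ℝ), HasDerivAt φ (fderiv ℝ B (x t, t) (x' t, 1)) t := by
    intro t ht
    have h1 : HasDerivAt (fun s => (x s, s)) (x' t, (1 : ℝ)) t :=
      (hx t ht).prodMk (hasDerivAt_id t)
    have h2 : HasFDerivAt B (fderiv ℝ B (x t, t)) (x t, t) :=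
      (hB.differentiable one_ne_zero (x t, t)).hasFDerivAt
    exact h2.comp_hasDerivAt_of_eq t h1 rfl
  have hφc : ContinuousOn φ (Set.Icc 0 T) := fun t ht =>
    (hderiv t ht.1).continuousAt.continuousWithinAt
  set S : Set ℝ := Set.Icc 0 T ∩ φ ⁻¹' Set.Ici 0 with hSdef
  have hS0 : (0 : ℝ) ∈ S := ⟨⟨le_rfl, hT⟩, h0⟩
  have hScl : IsClosed S :=
    hφc.preimage_isClosed_of_isClosed isClosed_Icc isClosed_Ici
  have hScomp : IsCompact S :=
    isCompact_Icc.of_isClosed_subset hScl Set.inter_subset_left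
  set s := sSup S with hsdef
  have hsS : s ∈ S := hScomp.sSup_mem ⟨0, hS0⟩
  have hs0 : (0 : ℝ) ≤ s := hsS.1.1
  have hsT : s ≤ T := hsS.1.2
  have hφs : 0 ≤ φ s := hsS.2
  have hsltT : s < T :=
    lt_of_le_of_ne hsT fun h => absurd hneg (not_lt.mpr (h ▸ hφs))
  have hnegOn : ∀ t ∈ Set.Ioc s T, φ t < 0 := by
    intro t ht
    by_contra hge
    push_neg at hge
    have : t ∈ S := ⟨⟨le_trans hs0 ht.1.le, ht.2⟩, hge⟩
    exact absurd (le_csSup hScomp.bddAbove this) (not_le.mpr ht.1)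
  have hmono : StrictMonoOn φ (Set.Icc s T) := by
    apply strictMonoOn_of_deriv_pos (convex_Icc s T)
    · intro t ht
      exact (hderiv t (le_trans hs0 ht.1)).continuousAt.continuousWithinAt
    · intro t ht
      rw [interior_Icc] at ht
      have ht0 : (0 : ℝ) ≤ t := le_trans hs0 ht.1.le
      rw [(hderiv t ht0).deriv]
      have hφt : φ t < 0 := hnegOn t ⟨ht.1, ht.2.le⟩
      have : γ (φ t) < 0 := hγ0 ▸ hγ_mono hφt
      calc (0 : ℝ) < -γ (φ t) := by linarith
        _ ≤ fderiv ℝ B (x t, t) (x' t, 1) := hineq t ht0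
  have := hmono ⟨le_rfl, hsT⟩ ⟨hsltT.le, le_rfl⟩ hsltT
  linarith
end

section
/- Let d ∈ ℕ, let a < b be real numbers, x* ∈ ℝ^d, ε ≥ 0, and let γ : ℝ → ℝ be a continuous function with γ(b) = 0. Define B(y,t) = ε - ‖y - x*‖ + γ(t), and let γ̄ : ℝ → ℝ be continuous with γ̄(s) < 0 for all s < 0. Suppose x : [a,∞) → ℝ^d is a differentiable trajectory such that the scalar function t ↦ B(x(t),t) is differentiable, B(x(a),a) ≥ 0, and d/dt[B(x(t),t)] ≥ -γ̄(B(x(t),t)) for all t ≥ a. Then ‖x(b) - x*‖ ≤ ε; in particular there exists t' ∈ [a,b] with ‖x(t') - x*‖ ≤ ε, so the STL task F_{[a,b]}(‖x - x*‖ ≤ ε) is satisfied. -/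
/-- Combining the CBF invariance theorem with the STL 'eventually reach' encoding:
with `B y t = ε - ‖y - x*‖ + γ t`, `γ b = 0`, a continuous `γ̄` negative on
negatives, and a differentiable trajectory `x` for which `t ↦ B (x t) t` is
differentiable with `B (x a) a ≥ 0` and `d/dt [B (x t) t] ≥ -γ̄ (B (x t) t)` for all
`t ≥ a`, we get `‖x b - x*‖ ≤ ε`; in particular there exists `t' ∈ [a,b]` with
`‖x t' - x*‖ ≤ ε`, so the STL task `F_{[a,b]} (‖x - x*‖ ≤ ε)` is satisfied. -/
theorem stl_eventually_via_cbf_invariance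
    (d : ℕ) (a b : ℝ) (hab : a < b)
    (xstar : EuclideanSpace ℝ (Fin d)) (ε : ℝ) (hε : 0 ≤ ε)
    (γ : ℝ → ℝ) (hγ_cont : Continuous γ) (hγb : γ b = 0)
    (γbar : ℝ → ℝ) (hγbar_cont : Continuous γbar)
    (hγbar_neg : ∀ s < (0 : ℝ), γbar s < 0)
    (x x' : ℝ → EuclideanSpace ℝ (Fin d))
    (hx : ∀ t ≥ a, HasDerivAt x (x' t) t)
    (B : EuclideanSpace ℝ (Fin d) → ℝ → ℝ)
    (hB : ∀ y t, B y t = ε - ‖y - xstar‖ + γ t)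
    (g' : ℝ → ℝ)
    (hg : ∀ t ≥ a, HasDerivAt (fun s => B (x s) s) (g' t) t)
    (h0 : B (x a) a ≥ 0)
    (hineq : ∀ t ≥ a, g' t ≥ -γbar (B (x t) t)) :
    ‖x b - xstar‖ ≤ ε ∧ ∃ t' ∈ Set.Icc a b, ‖x t' - xstar‖ ≤ ε := by
  set g : ℝ → ℝ := fun s => B (x s) s with hgdef
  have hgcont : ContinuousOn g (Set.Icc a b) := fun t ht =>
    ((hg t ht.1).continuousAt).continuousWithinAt
  -- main claim: g b ≥ 0
  have hgb : 0 ≤ g b := by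
    by_contra hneg
    push_neg at hneg
    set S : Set ℝ := {t ∈ Set.Icc a b | 0 ≤ g t} with hSdef
    have haS : a ∈ S := ⟨⟨le_refl a, hab.le⟩, h0⟩
    have hSne : S.Nonempty := ⟨a, haS⟩
    have hSbdd : BddAbove S := ⟨b, fun t ht => ht.1.2⟩
    set t0 : ℝ := sSup S with ht0def
    have ht0a : a ≤ t0 := le_csSup hSbdd haS
    have ht0b : t0 ≤ b := csSup_le hSne (fun t ht => ht.1.2)
    have hSclosed : IsClosed S := by
      have : S = Set.Icc a b ∩ g ⁻¹' Set.Ici 0 := by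
        ext t; simp [hSdef, Set.mem_inter_iff, and_comm]
      rw [this]
      exact hgcont.preimage_isClosed_of_isClosed isClosed_Icc isClosed_Ici
    have ht0S : t0 ∈ S := hSclosed.csSup_mem hSne hSbdd
    have hgt0 : 0 ≤ g t0 := ht0S.2
    have ht0lt : t0 < b := by
      rcases lt_or_eq_of_le ht0b with h | h
      · exact h
      · exact absurd (h ▸ hgt0) (not_le.mpr hneg)
    -- on (t0, b], g < 0
    have hgneg : ∀ t, t0 < t → t ≤ b → g t < 0 := by
      intro t ht1 ht2
      by_contra hc
      push_neg at hc
      have : t ∈ S := ⟨⟨ht0a.trans ht1.le, ht2⟩, hc⟩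
      exact absurd (le_csSup hSbdd this) (not_le.mpr ht1)
    -- g is strictly monotone on [t0, b]
    have hmono : StrictMonoOn g (Set.Icc t0 b) := by
      apply strictMonoOn_of_deriv_pos (convex_Icc t0 b)
      · exact hgcont.mono (Set.Icc_subset_Icc ht0a le_rfl)
      · intro t ht
        rw [interior_Icc] at ht
        have hta : a ≤ t := ht0a.trans ht.1.le
        have hderiv : deriv g t = g' t := (hg t hta).deriv
        have hgtneg : g t < 0 := hgneg t ht.1 ht.2.le
        have := hineq t hta
        have hγn := hγbar_neg (g t) hgtneg
        rw [hderiv]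
        linarith
    have := hmono (Set.left_mem_Icc.mpr ht0b) (Set.right_mem_Icc.mpr ht0b) ht0lt
    linarith
  have hnorm : ‖x b - xstar‖ ≤ ε := by
    have := hB (x b) b
    rw [hgdef] at hgb
    simp only [this, hγb] at hgb
    linarith
  exact ⟨hnorm, b, ⟨hab.le, le_refl b⟩, hnorm⟩
end
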